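/- For any complete lattice E, the complete lattice D(E) is completely distributive: for every doubly indexed family of elements 𝔸_j^i ∈ D(E) (j ∈ J, i ∈ I_j), one has ⋀_{j∈J} ⋁_{i∈I_j} 𝔸_j^i = ⋁_{f∈F} ⋀_{j∈J} 𝔸_j^{f(j)}, where F is the set of choice functions f(j) ∈ I_j. -/
import Mathlib


/-- Nonempty subsets of `P`. -/
def NSet (P : Type*) := {S : Set P // S.Nonempty}

/-- The domination preorder on nonempty subsets. -/
instance NSet.preorder {P : Type*} [Preorder P] : Preorder (NSet P) where
  le S T := ∀ a ∈ S.1, ∃ b ∈ T.1, a ≤ b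
  le_refl S a ha := ⟨a, ha, le_refl a⟩
  le_trans S T U h1 h2 a ha := by
    obtain ⟨b, hb, hab⟩ := h1 a ha
    obtain ⟨c, hc, hbc⟩ := h2 b hb
    exact ⟨c, hc, hab.trans hbc⟩

/-- `D(E)`: the quotient of nonempty subsets by mutual-domination equivalence. -/
abbrev DP (P : Type*) [Preorder P] := Antisymmetrization (NSet P) (· ≤ ·)

/-- The class `[S]` of a nonempty subset `S` in `D(E)`. -/
def cls {P : Type*} [Preorder P] (S : Set P) (h : S.Nonempty) : DP P :=
  toAntisymmetrization (· ≤ ·) (⟨S, h⟩ : NSet P)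

section Aux
variable {E : Type*} [CompleteLattice E]

lemma cls_le_cls {S T : Set E} (hS : S.Nonempty) (hT : T.Nonempty) :
    cls S hS ≤ cls T hT ↔ ∀ a ∈ S, ∃ b ∈ T, a ≤ b := Iff.rfl

lemma cls_out_eq (x : DP E) : cls (x.out.1) (x.out.2) = x := Quotient.out_eq x

lemma le_cls_iff (x : DP E) {T : Set E} (hT : T.Nonempty) :
    x ≤ cls T hT ↔ ∀ a ∈ x.out.1, ∃ b ∈ T, a ≤ b := by
  conv_lhs => rw [← cls_out_eq x]
  exact Iff.rfl

lemma cls_le_iff (x : DP E) {T : Set E} (hT : T.Nonempty) :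
    cls T hT ≤ x ↔ ∀ a ∈ T, ∃ b ∈ x.out.1, a ≤ b := by
  conv_lhs => rw [← cls_out_eq x]
  exact Iff.rfl

lemma isLUB_cls {ι : Type*} (A : ι → Set E) (hA : ∀ i, (A i).Nonempty) :
    IsLUB (Set.range fun i => cls (A i) (hA i))
      (cls (insert ⊥ (⋃ i, A i)) (Set.insert_nonempty _ _)) := by
  constructor
  · rintro x ⟨i, rfl⟩
    rw [cls_le_cls]
    exact fun a ha => ⟨a, Set.mem_insert_of_mem _ (Set.mem_iUnion_of_mem i ha), le_rfl⟩
  · intro x hx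
    rw [cls_le_iff]
    rintro a (rfl | ha)
    · exact ⟨x.out.2.choose, x.out.2.choose_spec, bot_le⟩
    · obtain ⟨i, hi⟩ := Set.mem_iUnion.1 ha
      have := hx (Set.mem_range_self i)
      rw [cls_le_iff] at this
      exact this a hi

def InfChoice {J : Type*} (S : J → Set E) : Set E :=
  {x | ∃ g : J → E, (∀ j, g j ∈ S j) ∧ x = ⨅ j, g j}

lemma InfChoice_nonempty {J : Type*} (S : J → Set E) (hS : ∀ j, (S j).Nonempty) :
    (InfChoice S).Nonempty :=
  ⟨_, fun j => (hS j).choose, fun j => (hS j).choose_spec, rfl⟩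

lemma isGLB_cls {J : Type*} (S : J → Set E) (hS : ∀ j, (S j).Nonempty) :
    IsGLB (Set.range fun j => cls (S j) (hS j))
      (cls (InfChoice S) (InfChoice_nonempty S hS)) := by
  constructor
  · rintro x ⟨j, rfl⟩
    rw [cls_le_cls]
    rintro a ⟨g, hg, rfl⟩
    exact ⟨g j, hg j, iInf_le _ j⟩
  · intro x hx
    rw [le_cls_iff]
    intro a ha
    have hj : ∀ j, ∃ b ∈ S j, a ≤ b := by
      intro j
      have := hx (Set.mem_range_self j)
      rw [le_cls_iff] at this
      exact this a ha
    choose g hg hag using hj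
    exact ⟨⨅ j, g j, ⟨g, hg, rfl⟩, le_iInf hag⟩

end Aux

/-- `D(E)` is completely distributive: for any doubly indexed family
`𝔸_j^i` of elements of `D(E)`,
`⋀_j ⋁_{i ∈ I_j} 𝔸_j^i = ⋁_{f} ⋀_j 𝔸_j^{f(j)}`,
the suprema and infima being expressed via `IsLUB`/`IsGLB`. -/
theorem DP_completely_distributive {E : Type*} [CompleteLattice E] {J : Type*}
    (I : J → Type*) (𝔸 : ∀ j, I j → DP E)
    (u : J → DP E) (hu : ∀ j, IsLUB (Set.range (𝔸 j)) (u j))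
    (v : DP E) (hv : IsGLB (Set.range u) v)
    (w : (∀ j, I j) → DP E)
    (hw : ∀ f : ∀ j, I j, IsGLB (Set.range fun j => 𝔸 j (f j)) (w f))
    (z : DP E) (hz : IsLUB (Set.range w) z) :
    v = z := by
  classical
  set A : ∀ j, I j → Set E := fun j i => (𝔸 j i).out.1 with hA
  have hAne : ∀ j i, (A j i).Nonempty := fun j i => (𝔸 j i).out.2
  have h𝔸 : ∀ j i, 𝔸 j i = cls (A j i) (hAne j i) := fun j i => (cls_out_eq _).symm
  -- u j is the class of the (⊥-padded) union
  set U : J → Set E := fun j => insert ⊥ (⋃ i, A j i) with hU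
  have hUne : ∀ j, (U j).Nonempty := fun j => Set.insert_nonempty _ _
  have hu_eq : ∀ j, u j = cls (U j) (hUne j) := by
    intro j
    refine (hu j).unique ?_
    have : (𝔸 j) = fun i => cls (A j i) (hAne j i) := funext fun i => h𝔸 j i
    rw [this]
    exact isLUB_cls (A j) (hAne j)
  -- v is the class of the choice-inf set over U
  have hv_eq : v = cls (InfChoice U) (InfChoice_nonempty U hUne) := by
    refine hv.unique ?_
    have : u = fun j => cls (U j) (hUne j) := funext hu_eq
    rw [this]
    exact isGLB_cls U hUne
  -- w f is the class of the choice-inf set over A · (f ·)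
  set W : (∀ j, I j) → Set E := fun f => InfChoice fun j => A j (f j) with hW
  have hWne : ∀ f, (W f).Nonempty := fun f => InfChoice_nonempty _ fun j => hAne j (f j)
  have hw_eq : ∀ f, w f = cls (W f) (hWne f) := by
    intro f
    refine (hw f).unique ?_
    have : (fun j => 𝔸 j (f j)) = fun j => cls (A j (f j)) (hAne j (f j)) :=
      funext fun j => h𝔸 j (f j)
    rw [this]
    exact isGLB_cls _ _
  have hz_eq : z = cls (insert ⊥ (⋃ f, W f)) (Set.insert_nonempty _ _) := by
    refine hz.unique ?_
    have : w = fun f => cls (W f) (hWne f) := funext hw_eq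
    rw [this]
    exact isLUB_cls W hWne
  rw [hv_eq, hz_eq]
  apply le_antisymm
  · -- InfChoice U ≤ insert ⊥ (⋃ f, W f)
    rw [cls_le_cls]
    rintro a ⟨g, hg, rfl⟩
    by_cases h : ∀ j, g j ∈ ⋃ i, A j i
    · choose f hf using fun j => Set.mem_iUnion.1 (h j)
      exact ⟨⨅ j, g j, Set.mem_insert_of_mem _ (Set.mem_iUnion_of_mem f ⟨g, hf, rfl⟩), le_rfl⟩
    · push_neg at h
      obtain ⟨j, hj⟩ := h
      have hgj : g j = ⊥ := by
        rcases hg j with h' | h'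
        · exact h'
        · exact absurd h' hj
      exact ⟨⊥, Set.mem_insert _ _, (iInf_le _ j).trans hgj.le⟩
  · rw [cls_le_cls]
    rintro a (rfl | ha)
    · exact ⟨(InfChoice_nonempty U hUne).choose, (InfChoice_nonempty U hUne).choose_spec, bot_le⟩
    · obtain ⟨f, g, hg, rfl⟩ := Set.mem_iUnion.1 ha
      refine ⟨⨅ j, g j, ⟨g, fun j => Set.mem_insert_of_mem _ (Set.mem_iUnion_of_mem (f j) (hg j)), rfl⟩, le_rfl⟩
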